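/- For every z > 0, the quantity h'(z) := -A'(√z)/(16·√z·A(√z)³) is strictly positive and strictly less than 1, where A(x) = -tanh(x/2)/(4x) with derivative A'. -/

import Mathlib

noncomputable def Afun (x : ℝ) : ℝ := -(Real.tanh (x/2))/(4*x)

/-!
Write `y = x / 2` and `t = tanh y`. Since `tanh' = 1 - tanh²`, the quantity equals
`(t - y (1 - t²)) / t³`. It is positive because `y (1 - t²) = y / cosh² y < tanh y`, which is
`2y < sinh 2y`; it is less than `1` because, after dividing by `1 - t² > 0`, this is `tanh y < y`.
-/

namespace Real

theorem hasDerivAt_tanh (x : ℝ) : HasDerivAt tanh (1 - tanh x ^ 2) x := by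
  have hc : cosh x ≠ 0 := (cosh_pos x).ne'
  rw [show tanh = fun y => sinh y / cosh y from funext tanh_eq_sinh_div_cosh]
  refine ((hasDerivAt_sinh x).div (hasDerivAt_cosh x) hc).congr_deriv ?_
  field_simp

theorem tanh_pos {x : ℝ} (hx : 0 < x) : 0 < tanh x := by
  rw [tanh_eq_sinh_div_cosh]
  exact div_pos (sinh_pos_iff.2 hx) (cosh_pos x)

theorem tanh_lt_self {x : ℝ} (hx : 0 < x) : tanh x < x := by
  have hderiv (y : ℝ) : HasDerivAt (fun y => y - tanh y) (tanh y ^ 2) y :=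
    ((hasDerivAt_id' y).sub (hasDerivAt_tanh y)).congr_deriv (by ring)
  have hmono : StrictMonoOn (fun y => y - tanh y) (Set.Ici 0) := by
    refine strictMonoOn_of_deriv_pos (convex_Ici 0)
      (fun y _ => (hderiv y).continuousAt.continuousWithinAt) fun y hy => ?_
    rw [interior_Ici, Set.mem_Ioi] at hy
    rw [(hderiv y).deriv]
    exact pow_pos (tanh_pos hy) 2
  simpa using hmono Set.self_mem_Ici hx.le hx

theorem mul_one_sub_tanh_sq_lt_tanh {x : ℝ} (hx : 0 < x) : x * (1 - tanh x ^ 2) < tanh x := by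
  have hc := cosh_pos x
  have h2x : 2 * x < 2 * sinh x * cosh x := sinh_two_mul x ▸ self_lt_sinh_iff.2 (by positivity)
  have hsech : 1 - tanh x ^ 2 = 1 / cosh x ^ 2 := by
    rw [tanh_eq_sinh_div_cosh]
    field_simp
    linear_combination cosh_sq x
  rw [hsech, tanh_eq_sinh_div_cosh, mul_one_div, div_lt_div_iff₀ (by positivity) hc]
  nlinarith

end Real

open Real

theorem hasDerivAt_Afun {x : ℝ} (hx : x ≠ 0) :
    HasDerivAt Afun ((2 * tanh (x / 2) - x * (1 - tanh (x / 2) ^ 2)) / (8 * x ^ 2)) x := by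
  have htanh : HasDerivAt (tanh ∘ fun y => y / 2) ((1 - tanh (x / 2) ^ 2) * (1 / 2)) x :=
    (hasDerivAt_tanh (x / 2)).comp x ((hasDerivAt_id' x).div_const 2)
  refine (htanh.neg.div ((hasDerivAt_id' x).const_mul 4) (by positivity)).congr_deriv ?_
  simp only [Pi.neg_apply, Function.comp_apply]
  field_simp
  ring

theorem neg_deriv_Afun_div_eq {x : ℝ} (hx : 0 < x) :
    -deriv Afun x / (16 * x * Afun x ^ 3) =
      (tanh (x / 2) - x / 2 * (1 - tanh (x / 2) ^ 2)) / tanh (x / 2) ^ 3 := by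
  have ht := tanh_pos (half_pos hx)
  rw [(hasDerivAt_Afun hx.ne').deriv, Afun]
  field_simp
  ring

theorem neg_deriv_Afun_div_mem_Ioo {x : ℝ} (hx : 0 < x) :
    -deriv Afun x / (16 * x * Afun x ^ 3) ∈ Set.Ioo 0 1 := by
  have hy := half_pos hx
  have ht := tanh_pos hy
  rw [neg_deriv_Afun_div_eq hx, Set.mem_Ioo, div_lt_one (by positivity)]
  constructor
  · exact div_pos (sub_pos.2 (mul_one_sub_tanh_sq_lt_tanh hy)) (by positivity)
  · nlinarith [tanh_lt_self hy, tanh_sq_lt_one (x / 2)]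

theorem stmt7 (z : ℝ) (hz : 0 < z) :
    0 < -(deriv Afun (Real.sqrt z)) / (16 * Real.sqrt z * (Afun (Real.sqrt z))^3) ∧
    -(deriv Afun (Real.sqrt z)) / (16 * Real.sqrt z * (Afun (Real.sqrt z))^3) < 1 :=
  neg_deriv_Afun_div_mem_Ioo (Real.sqrt_pos.2 hz)
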